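/- arXiv:2507.15093 — 2 statements merged into one kernel-verified Lean document; each statement's English description precedes it below -/
import Mathlib

section
/- The Jacobian of the i-th Kronecker power of a vector x ∈ ℝ^{n} is given by ∂x^{(i)}/∂x = Σ_{k=0}^{i-1} x^{(k)} ⊗ Iₙ ⊗ x^{(i-k-1)}, where x^{(j)} denotes the j-th Kronecker power of x (with x^{(0)} = 1) and Iₙ the n×n identity matrix. -/
open Matrix Finset

/-- Kronecker product of `Fin`-indexed real matrices, with flattened index types. -/
def kron {m n p q : ℕ} (A : Matrix (Fin m) (Fin n) ℝ) (B : Matrix (Fin p) (Fin q) ℝ) :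
    Matrix (Fin (m * p)) (Fin (n * q)) ℝ :=
  Matrix.reindex finProdFinEquiv finProdFinEquiv (A.kroneckerMap (· * ·) B)

/-- Cast a matrix along equalities of its `Fin` dimensions. -/
def mcast {m n m' n' : ℕ} (hm : m = m') (hn : n = n') (A : Matrix (Fin m) (Fin n) ℝ) :
    Matrix (Fin m') (Fin n') ℝ :=
  Matrix.reindex (finCongr hm) (finCongr hn) A

/-- `k`-th Kronecker power of a matrix, `M^{(0)} = 1` and `M^{(k+1)} = M^{(k)} ⊗ M`. -/
def kronPow {m n : ℕ} : (k : ℕ) → Matrix (Fin m) (Fin n) ℝ → Matrix (Fin (m ^ k)) (Fin (n ^ k)) ℝ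
  | 0, _ => mcast rfl rfl (1 : Matrix (Fin 1) (Fin 1) ℝ)
  | k + 1, A => mcast (pow_succ m k).symm (pow_succ n k).symm (kron (kronPow k A) A)

/-- A vector as a column matrix. -/
def cvec {n : ℕ} (x : Fin n → ℝ) : Matrix (Fin n) (Fin 1) ℝ := Matrix.of fun i _ => x i

lemma dim_row {n i k : ℕ} (h : k < i) : n ^ k * (n * n ^ (i - k - 1)) = n ^ i := by
  have h1 : k + (1 + (i - k - 1)) = i := by omega
  calc n ^ k * (n * n ^ (i - k - 1)) = n ^ k * (n ^ 1 * n ^ (i - k - 1)) := by rw [pow_one]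
    _ = n ^ (k + (1 + (i - k - 1))) := by rw [← pow_add, ← pow_add]
    _ = n ^ i := by rw [h1]

lemma dim_one {n i k : ℕ} : (1:ℕ) ^ k * (n * 1 ^ (i - k - 1)) = n := by simp

/-- The claimed Jacobian matrix `Σ_{k=0}^{i-1} x^{(k)} ⊗ Iₙ ⊗ x^{(i-k-1)}` of `x ↦ x^{(i)}`. -/
def kronJac {n : ℕ} (i : ℕ) (x : Fin n → ℝ) : Matrix (Fin (n ^ i)) (Fin n) ℝ :=
  ∑ k : Fin i, mcast (dim_row k.isLt) dim_one
    (kron (kronPow k (cvec x)) (kron (1 : Matrix (Fin n) (Fin n) ℝ) (kronPow (i - k - 1) (cvec x))))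

/-- `x^{(i)}` as a plain vector in `ℝ^{nⁱ}`. -/
def kronPowVec {n : ℕ} (i : ℕ) (x : Fin n → ℝ) : Fin (n ^ i) → ℝ :=
  fun j => kronPow i (cvec x) j (finCongr (one_pow i).symm 0)

-- auxiliary lemmas
lemma div_bound {a D M N : ℕ} (h : M * D = N) (hD : 0 < D) (hj : a < N) : a / D < M :=
  Nat.div_lt_of_lt_mul (by rw [mul_comm] at h; omega)
lemma mod_bound {a D : ℕ} (hD : 0 < D) : a % D < D := Nat.mod_lt _ hD

lemma mcast_apply {m n m' n' : ℕ} (hm : m = m') (hn : n = n') (A : Matrix (Fin m) (Fin n) ℝ)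
    (r : Fin m') (c : Fin n') :
    mcast hm hn A r c = A (Fin.cast hm.symm r) (Fin.cast hn.symm c) := rfl

lemma kron_apply {m n p q : ℕ} (A : Matrix (Fin m) (Fin n) ℝ) (B : Matrix (Fin p) (Fin q) ℝ)
    (r : Fin (m*p)) (c : Fin (n*q)) :
    kron A B r c = A r.divNat c.divNat * B r.modNat c.modNat := rfl

lemma kronPowVec_eq {n e e' : ℕ} (h : e = e') (x : Fin n → ℝ) (d : Fin (n^e)) (d' : Fin (n^e'))
    (hd : (d:ℕ) = (d':ℕ)) : kronPowVec e x d = kronPowVec e' x d' := by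
  subst h; exact congrArg _ (Fin.ext hd)

lemma kronPowVec_zero {n : ℕ} (x : Fin n → ℝ) (d : Fin (n^0)) : kronPowVec 0 x d = 1 := by
  have h1 : (d:ℕ) < n ^ 0 := d.isLt
  have h2 : n ^ 0 = 1 := pow_zero n
  have hd : (d : ℕ) = 0 := by omega
  change (1 : Matrix (Fin 1) (Fin 1) ℝ) ⟨d, by omega⟩ 0 = 1
  simp [kronPowVec, kronPow, mcast, Matrix.one_apply, Fin.ext_iff, hd]

lemma kronPowVec_succ {n i : ℕ} (x : Fin n → ℝ) (j : Fin (n^(i+1))) (a : Fin (n^i)) (b : Fin n)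
    (ha : (a:ℕ) = (j:ℕ) / n) (hb : (b:ℕ) = (j:ℕ) % n) :
    kronPowVec (i+1) x j = kronPowVec i x a * x b := by
  show mcast (pow_succ n i).symm (pow_succ 1 i).symm (kron (kronPow i (cvec x)) (cvec x)) j _ = _
  rw [mcast_apply, kron_apply]
  have e1 : (Fin.cast (pow_succ n i).symm.symm j).divNat = a := Fin.ext ha.symm
  have e2 : (Fin.cast (pow_succ n i).symm.symm j).modNat = b := Fin.ext hb.symm
  have e3 : (Fin.cast (pow_succ 1 i).symm.symm (finCongr (one_pow (i+1)).symm 0)).divNat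
      = finCongr (one_pow i).symm 0 := Fin.ext (by simp [Fin.divNat])
  rw [e1, e2, e3]
  rfl

lemma jacTerm_apply {n k e N : ℕ} (x : Fin n → ℝ) (h1 : n ^ k * (n * n ^ e) = N)
    (h2 : (1:ℕ) ^ k * (n * 1 ^ e) = n) (j : Fin N) (c : Fin n)
    (a : Fin (n ^ k)) (d : Fin (n ^ e))
    (ha : (a : ℕ) = (j : ℕ) / (n * n ^ e)) (hd : (d : ℕ) = (j : ℕ) % n ^ e) :
    mcast h1 h2 (kron (kronPow k (cvec x)) (kron (1 : Matrix (Fin n) (Fin n) ℝ) (kronPow e (cvec x)))) j c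
      = kronPowVec k x a *
        ((if (j : ℕ) % (n * n ^ e) / n ^ e = (c : ℕ) then (1:ℝ) else 0) * kronPowVec e x d) := by
  rw [mcast_apply, kron_apply, kron_apply]
  have e1 : (Fin.cast h1.symm j).divNat = a := Fin.ext ha.symm
  have e2 : (Fin.cast h2.symm c).divNat = finCongr (one_pow k).symm 0 := by
    apply Fin.ext
    show (c:ℕ) / (n * 1 ^ e) = ((0 : Fin 1):ℕ)
    simp [Nat.div_eq_of_lt c.isLt]
  have e3 : (Fin.cast h1.symm j).modNat.modNat = d := Fin.ext (by
    show ((j:ℕ) % (n * n ^ e)) % n ^ e = (d:ℕ)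
    rw [hd, Nat.mod_mod_of_dvd _ (dvd_mul_left _ _)])
  have e4 : ((Fin.cast h2.symm c).modNat.modNat : ℕ) = 0 := by
    show ((c:ℕ) % (n * 1 ^ e)) % 1 ^ e = 0
    simp [Nat.mod_one]
  have e5 : ((Fin.cast h2.symm c).modNat.divNat : ℕ) = (c : ℕ) := by
    show ((c:ℕ) % (n * 1 ^ e)) / 1 ^ e = (c:ℕ)
    simp [Nat.mod_eq_of_lt c.isLt]
  rw [e1, e2, e3]
  rw [Matrix.one_apply]
  have e6 : ((Fin.cast h1.symm j).modNat.divNat = (Fin.cast h2.symm c).modNat.divNat)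
      = ((j : ℕ) % (n * n ^ e) / n ^ e = (c : ℕ)) := by
    rw [Fin.ext_iff, e5]; rfl
  simp only [e6]
  have e7 : kronPow e (cvec x) d (Fin.cast h2.symm c).modNat.modNat = kronPowVec e x d := by
    show _ = kronPow e (cvec x) d (finCongr (one_pow e).symm 0)
    congr 1
    exact Fin.ext (e4.trans rfl)
  rw [e7]
  rfl
lemma nat1 (j n q : ℕ) : j / (n * (q * n)) = j / n / (n * q) := by
  rw [Nat.div_div_eq_div_mul]; congr 1; ring
lemma nat2 (j n q : ℕ) : j % (n * (q * n)) / (q * n) = j / n % (n * q) / q := by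
  rw [show n * (q * n) = q * n * n by ring, Nat.mod_mul_right_div_self,
    mul_comm n q, Nat.mod_mul_right_div_self, Nat.div_div_eq_div_mul, mul_comm q n]
lemma nat3 (j n q : ℕ) : j % (q * n) / n = j / n % q := by
  rw [mul_comm, Nat.mod_mul_right_div_self]
lemma nat4 (j n q : ℕ) : j % (q * n) % n = j % n := Nat.mod_mod_of_dvd j ⟨q, mul_comm q n⟩

lemma kronJac_succ_apply {n i : ℕ} (x : Fin n → ℝ) (j : Fin (n^(i+1))) (c : Fin n)
    (a : Fin (n^i)) (b : Fin n) (ha : (a:ℕ) = (j:ℕ)/n) (hb : (b:ℕ) = (j:ℕ) % n) :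
    kronJac (i+1) x j c = kronJac i x a c * x b
      + kronPowVec i x a * (if b = c then (1:ℝ) else 0) := by
  have hn : 0 < n := by
    cases n with
    | zero => exact b.elim0
    | succ m => exact Nat.succ_pos m
  unfold kronJac
  rw [Matrix.sum_apply, Matrix.sum_apply, Fin.sum_univ_castSucc, Finset.sum_mul]
  simp only [Fin.coe_castSucc, Fin.val_last]
  congr 1
  · refine Finset.sum_congr rfl fun k _ => ?_
    have hk : (k:ℕ) < i := k.isLt
    have hE : i + 1 - (k:ℕ) - 1 = (i - (k:ℕ) - 1) + 1 := by omega
    have hq : n ^ (i + 1 - (k:ℕ) - 1) = n ^ (i - (k:ℕ) - 1) * n := by rw [hE, pow_succ]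
    have h1k : n ^ (k:ℕ) * (n * n ^ (i+1-(k:ℕ)-1)) = n^(i+1) := dim_row (by omega)
    rw [jacTerm_apply x h1k dim_one j c
        ⟨(j:ℕ) / (n * n ^ (i+1-(k:ℕ)-1)),
          div_bound h1k (by positivity) j.isLt⟩
        ⟨(j:ℕ) % n ^ (i+1-(k:ℕ)-1), mod_bound (by positivity)⟩ rfl rfl]
    rw [jacTerm_apply x (dim_row k.isLt) dim_one a c
        ⟨(a:ℕ) / (n * n ^ (i-(k:ℕ)-1)),
          div_bound (dim_row k.isLt) (by positivity) a.isLt⟩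
        ⟨(a:ℕ) % n ^ (i-(k:ℕ)-1), mod_bound (by positivity)⟩ rfl rfl]
    -- rewrite the (i+1-k-1) kronPowVec factor as a product
    rw [kronPowVec_eq hE x _ ⟨(j:ℕ) % n ^ (i+1-(k:ℕ)-1), by
        have h1 : (j:ℕ) % n ^ (i+1-(k:ℕ)-1) < n ^ (i+1-(k:ℕ)-1) := mod_bound (by positivity)
        have h2 : n ^ ((i - (k:ℕ) - 1) + 1) = n ^ (i+1-(k:ℕ)-1) := by rw [hE]
        omega⟩ rfl]
    rw [kronPowVec_succ x _
        ⟨(j:ℕ) % n ^ (i+1-(k:ℕ)-1) / n, div_bound (pow_succ n (i-(k:ℕ)-1)).symm hn (by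
          have h1 : (j:ℕ) % n ^ (i+1-(k:ℕ)-1) < n ^ (i+1-(k:ℕ)-1) := mod_bound (by positivity)
          have h2 : n ^ ((i - (k:ℕ) - 1) + 1) = n ^ (i+1-(k:ℕ)-1) := by rw [hE]
          omega)⟩
        ⟨(j:ℕ) % n ^ (i+1-(k:ℕ)-1) % n, mod_bound hn⟩ rfl rfl]
    -- now equate the pieces
    have hA : (j:ℕ) / (n * n ^ (i+1-(k:ℕ)-1)) = (a:ℕ) / (n * n ^ (i-(k:ℕ)-1)) := by
      rw [ha, hq]; exact nat1 (j:ℕ) n _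
    have hcond : (j:ℕ) % (n * n ^ (i+1-(k:ℕ)-1)) / n ^ (i+1-(k:ℕ)-1)
        = (a:ℕ) % (n * n ^ (i-(k:ℕ)-1)) / n ^ (i-(k:ℕ)-1) := by
      rw [ha, hq]; exact nat2 (j:ℕ) n _
    have hD : (j:ℕ) % n ^ (i+1-(k:ℕ)-1) / n = (a:ℕ) % n ^ (i-(k:ℕ)-1) := by
      rw [ha, hq]; exact nat3 (j:ℕ) n _
    have hb2 : (j:ℕ) % n ^ (i+1-(k:ℕ)-1) % n = (b:ℕ) := by
      rw [hb, hq]; exact nat4 (j:ℕ) n _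
    rw [kronPowVec_eq rfl x _ ⟨(a:ℕ) / (n * n ^ (i-(k:ℕ)-1)),
        div_bound (dim_row k.isLt) (by positivity) a.isLt⟩ hA]
    rw [kronPowVec_eq rfl x _ ⟨(a:ℕ) % n ^ (i-(k:ℕ)-1), mod_bound (by positivity)⟩ hD]
    rw [hcond]
    rw [show x ⟨(j:ℕ) % n ^ (i+1-(k:ℕ)-1) % n, mod_bound hn⟩ = x b from congrArg x (Fin.ext hb2)]
    ring
  · -- last term
    have he : i + 1 - (i:ℕ) - 1 = 0 := by omega
    have h1l : n ^ i * (n * n ^ (i+1-i-1)) = n^(i+1) := dim_row (by omega)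
    rw [jacTerm_apply x h1l dim_one j c
        ⟨(j:ℕ) / (n * n ^ (i+1-i-1)),
          div_bound h1l (by positivity) j.isLt⟩
        ⟨(j:ℕ) % n ^ (i+1-i-1), mod_bound (by positivity)⟩ rfl rfl]
    rw [kronPowVec_eq he x _ (⟨0, by simp⟩ : Fin (n^0)) (by
      have h2 : n ^ (i+1-i-1) = 1 := by rw [he, pow_zero]
      simp [Nat.mod_eq_of_lt, h2, Nat.mod_one])]
    rw [kronPowVec_zero]
    have hA : (j:ℕ) / (n * n ^ (i+1-i-1)) = (a:ℕ) := by
      have h2 : n ^ (i+1-i-1) = 1 := by rw [he, pow_zero]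
      rw [ha, h2, mul_one]
    have hcond : ((j:ℕ) % (n * n ^ (i+1-i-1)) / n ^ (i+1-i-1) = (c:ℕ)) = (b = c) := by
      have h2 : n ^ (i+1-i-1) = 1 := by rw [he, pow_zero]
      rw [h2, mul_one, Nat.div_one, Fin.ext_iff, hb]
    rw [kronPowVec_eq rfl x _ a hA]
    simp only [hcond]
    ring

lemma hasFDerivAt_coord {n : ℕ} (x : Fin n → ℝ) : ∀ (i : ℕ) (j : Fin (n^i)),
    HasFDerivAt (fun y => kronPowVec i y j)
      ((ContinuousLinearMap.proj j).comp
        (LinearMap.toContinuousLinearMap (Matrix.mulVecLin (kronJac i x)))) x := by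
  intro i
  induction i with
  | zero =>
    intro j
    have h0 : (fun y : Fin n → ℝ => kronPowVec 0 y j) = fun _ => (1:ℝ) :=
      funext fun y => kronPowVec_zero y j
    have hL : ((ContinuousLinearMap.proj j).comp
        (LinearMap.toContinuousLinearMap (Matrix.mulVecLin (kronJac 0 x))))
        = (0 : (Fin n → ℝ) →L[ℝ] ℝ) := by
      refine ContinuousLinearMap.ext fun u => ?_
      show (kronJac 0 x *ᵥ u) j = 0
      rw [show kronJac 0 x = 0 from Fin.sum_univ_zero _]
      exact congrFun (Matrix.zero_mulVec u) j
    rw [h0, hL]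
    exact hasFDerivAt_const 1 x
  | succ i IH =>
    intro j
    have hn : 0 < n := by
      rcases Nat.eq_zero_or_pos n with h|h
      · exfalso
        have h1 := j.isLt
        have h2 : n ^ (i+1) = 0 := by rw [h, Nat.zero_pow (Nat.succ_pos i)]
        omega
      · exact h
    set a : Fin (n^i) := ⟨(j:ℕ)/n, div_bound (pow_succ n i).symm hn j.isLt⟩ with ha
    set b : Fin n := ⟨(j:ℕ) % n, mod_bound hn⟩ with hb
    have hfun : (fun y : Fin n → ℝ => kronPowVec (i+1) y j) = fun y => kronPowVec i y a * y b :=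
      funext fun y => kronPowVec_succ y j a b rfl rfl
    have hproj := hasFDerivAt_apply (𝕜 := ℝ) (F' := fun _ : Fin n => ℝ) b x
    have hmul := (IH a).mul hproj
    have hrow : ∀ c : Fin n, kronJac (i+1) x j c
        = kronJac i x a c * x b + kronPowVec i x a * (if b = c then (1:ℝ) else 0) :=
      fun c => kronJac_succ_apply x j c a b rfl rfl
    have hL : ((ContinuousLinearMap.proj j).comp
        (LinearMap.toContinuousLinearMap (Matrix.mulVecLin (kronJac (i+1) x))))
        = kronPowVec i x a • ContinuousLinearMap.proj b
          + x b • ((ContinuousLinearMap.proj a).comp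
              (LinearMap.toContinuousLinearMap (Matrix.mulVecLin (kronJac i x)))) := by
      refine ContinuousLinearMap.ext fun u => ?_
      simp only [ContinuousLinearMap.comp_apply, ContinuousLinearMap.proj_apply,
        LinearMap.coe_toContinuousLinearMap', Matrix.mulVecLin_apply,
        ContinuousLinearMap.add_apply, ContinuousLinearMap.smul_apply, smul_eq_mul,
        ContinuousLinearMap.coe_smul', Pi.smul_apply]
      show Matrix.mulVec _ u j = _
      simp only [Matrix.mulVec, dotProduct, hrow, add_mul, mul_ite, ite_mul, mul_one, mul_zero,
        zero_mul, Finset.sum_add_distrib, Finset.sum_ite_eq, Finset.mem_univ, if_true]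
      rw [add_comm]
      congr 1
      rw [Finset.mul_sum]
      exact Finset.sum_congr rfl fun c _ => by ring
    rw [hfun, hL]
    exact hmul

/-- The Jacobian of the `i`-th Kronecker power `x ↦ x^{(i)}` is
`Σ_{k=0}^{i-1} x^{(k)} ⊗ Iₙ ⊗ x^{(i-k-1)}`. -/
theorem hasFDerivAt_kronPow {n : ℕ} (i : ℕ) (x : Fin n → ℝ) :
    HasFDerivAt (kronPowVec i)
      (LinearMap.toContinuousLinearMap (Matrix.mulVecLin (kronJac i x))) x :=
  hasFDerivAt_pi'.mpr fun j => hasFDerivAt_coord x i j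
end

section
/- Let g(σ) = Σ_{l=0}^{p} γ_l σ^l be a scalar polynomial and let σ = ṽz + v̂u where ṽ, z and v̂, u are such that ṽz and v̂u are scalars (row-vector times column-vector products). Then g(ṽz + v̂u) = Σ_{l=0}^{p} γ_l ṽ^{(l)} z^{(l)} + (Σ_{l=1}^{p} γ_l Σ_{k=1}^{l} C(l,k) ṽ^{(l-k)} z^{(l-k)} v̂^{(k)} (I_{n_u} ⊗ u^{(k-1)})) u, where M^{(j)} denotes the j-th Kronecker power, C(l,k) is the binomial coefficient, and u^{(k)} = (I_{n_u} ⊗ u^{(k-1)}) u. -/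
open Matrix Finset

/-- The unique entry of a `1×1`-sized matrix. -/
def scal {a b : ℕ} (A : Matrix (Fin a) (Fin b) ℝ) (ha : a = 1) (hb : b = 1) : ℝ :=
  A (finCongr ha.symm 0) (finCongr hb.symm 0)


/-! Every quantity in the identity is a `1 × 1` matrix. The mixed-product rule
`(A ⊗ B)(C ⊗ D) = AC ⊗ BD` gives `ṽ^{(l)} z^{(l)} = (ṽz)^l`, and, after rewriting
`v̂^{(k+1)} = v̂ ⊗ v̂^{(k)}` (associativity of `⊗`), also
`v̂^{(k+1)} (I ⊗ u^{(k)}) u = (v̂ ⊗ v̂^{(k)} u^{(k)}) u = (v̂u)^{k+1}`.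
What remains is the binomial theorem for `(ṽz + v̂u)^l` with the term `(ṽz)^l` split off. -/

theorem mcast_rfl {m n : ℕ} (hm : m = m) (hn : n = n) (A : Matrix (Fin m) (Fin n) ℝ) :
    mcast hm hn A = A := rfl

theorem mcast_mcast {m n m' n' m'' n'' : ℕ} (hm : m = m') (hn : n = n') (hm' : m' = m'')
    (hn' : n' = n'') (A : Matrix (Fin m) (Fin n) ℝ) :
    mcast hm' hn' (mcast hm hn A) = mcast (hm.trans hm') (hn.trans hn') A := by
  subst hm hn hm' hn'; rfl

theorem mcast_mul_mcast {a b c a' b' c' : ℕ} (ha : a = a') (hb hb' : b = b') (hc : c = c')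
    (A : Matrix (Fin a) (Fin b) ℝ) (B : Matrix (Fin b) (Fin c) ℝ) :
    mcast ha hb A * mcast hb' hc B = mcast ha hc (A * B) := by
  subst ha hb hc; rfl

theorem mcast_mul {a a' b c : ℕ} (ha : a = a') (A : Matrix (Fin a) (Fin b) ℝ)
    (B : Matrix (Fin b) (Fin c) ℝ) : mcast ha rfl A * B = mcast ha rfl (A * B) := by
  subst ha; rfl

theorem scal_mcast {a b a' b' : ℕ} (h1 : a = a') (h2 : b = b') (ha : a' = 1) (hb : b' = 1)
    (A : Matrix (Fin a) (Fin b) ℝ) :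
    scal (mcast h1 h2 A) ha hb = scal A (h1.trans ha) (h2.trans hb) := by
  subst h1 h2; rfl

theorem scal_smul {a b : ℕ} (c : ℝ) (A : Matrix (Fin a) (Fin b) ℝ) (ha : a = 1) (hb : b = 1) :
    scal (c • A) ha hb = c * scal A ha hb := rfl

theorem scal_sum {a b : ℕ} {ι : Type*} (s : Finset ι) (f : ι → Matrix (Fin a) (Fin b) ℝ)
    (ha : a = 1) (hb : b = 1) :
    scal (∑ i ∈ s, f i) ha hb = ∑ i ∈ s, scal (f i) ha hb := by
  simp [scal, Matrix.sum_apply]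

theorem kron_apply_finProdFinEquiv {a b c d : ℕ} (A : Matrix (Fin a) (Fin b) ℝ)
    (B : Matrix (Fin c) (Fin d) ℝ) (i : Fin a) (i' : Fin c) (j : Fin b) (j' : Fin d) :
    kron A B (finProdFinEquiv (i, i')) (finProdFinEquiv (j, j')) = A i j * B i' j' := by
  simp [kron]

theorem kron_mul_kron {a b c d e f : ℕ} (A : Matrix (Fin a) (Fin b) ℝ)
    (B : Matrix (Fin b) (Fin c) ℝ) (C : Matrix (Fin d) (Fin e) ℝ) (D : Matrix (Fin e) (Fin f) ℝ) :
    kron A C * kron B D = kron (A * B) (C * D) := by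
  simp only [kron, Matrix.reindex_apply, Matrix.submatrix_mul_equiv, Matrix.mul_kronecker_mul]

theorem kron_mcast_left {a b a' b' c d : ℕ} (ha : a = a') (hb : b = b')
    (A : Matrix (Fin a) (Fin b) ℝ) (B : Matrix (Fin c) (Fin d) ℝ) :
    kron (mcast ha hb A) B = mcast (by rw [ha]) (by rw [hb]) (kron A B) := by
  subst ha hb; rfl

theorem kron_mcast_right {a b c d c' d' : ℕ} (hc : c = c') (hd : d = d')
    (A : Matrix (Fin a) (Fin b) ℝ) (B : Matrix (Fin c) (Fin d) ℝ) :
    kron A (mcast hc hd B) = mcast (by rw [hc]) (by rw [hd]) (kron A B) := by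
  subst hc hd; rfl

theorem kron_assoc {m n p q s t : ℕ} (A : Matrix (Fin m) (Fin n) ℝ)
    (B : Matrix (Fin p) (Fin q) ℝ) (C : Matrix (Fin s) (Fin t) ℝ) :
    kron (kron A B) C =
      mcast (mul_assoc m p s).symm (mul_assoc n q t).symm (kron A (kron B C)) := by
  have hassoc {x y w : ℕ} (i : Fin x) (j : Fin y) (k : Fin w) :
      finCongr (mul_assoc x y w) (finProdFinEquiv (finProdFinEquiv (i, j), k)) =
        finProdFinEquiv (i, finProdFinEquiv (j, k)) := by
    ext
    simp only [finCongr_apply, Fin.val_cast, finProdFinEquiv_apply_val]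
    ring
  ext i j
  obtain ⟨⟨i₁₂, i₃⟩, rfl⟩ := finProdFinEquiv.surjective i
  obtain ⟨⟨i₁, i₂⟩, rfl⟩ := finProdFinEquiv.surjective i₁₂
  obtain ⟨⟨j₁₂, j₃⟩, rfl⟩ := finProdFinEquiv.surjective j
  obtain ⟨⟨j₁, j₂⟩, rfl⟩ := finProdFinEquiv.surjective j₁₂
  change _ = kron A (kron B C) (finCongr (mul_assoc m p s) _) (finCongr (mul_assoc n q t) _)
  simp only [hassoc, kron_apply_finProdFinEquiv, mul_assoc]

theorem kron_eq_smul_of_right {m n c d : ℕ} (A : Matrix (Fin m) (Fin n) ℝ)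
    (C : Matrix (Fin c) (Fin d) ℝ) (hc : c = 1) (hd : d = 1) :
    kron A C = mcast (by rw [hc, mul_one]) (by rw [hd, mul_one]) (scal C hc hd • A) := by
  subst hc hd
  have hdiv {k : ℕ} (x : Fin (k * 1)) : x.divNat = Fin.cast (mul_one k) x := Fin.ext (by simp)
  ext i j
  simp only [kron, mcast, scal, reindex_apply, submatrix_apply, kroneckerMap_apply,
    finProdFinEquiv_symm_apply, hdiv, Subsingleton.elim _ (0 : Fin 1), finCongr_refl,
    finCongr_symm, finCongr_apply, Matrix.smul_apply, smul_eq_mul]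
  exact mul_comm _ _

theorem kron_eq_smul_of_left {m n c d : ℕ} (C : Matrix (Fin c) (Fin d) ℝ)
    (A : Matrix (Fin m) (Fin n) ℝ) (hc : c = 1) (hd : d = 1) :
    kron C A = mcast (by rw [hc, one_mul]) (by rw [hd, one_mul]) (scal C hc hd • A) := by
  subst hc hd
  have hmod {k : ℕ} (x : Fin (1 * k)) : x.modNat = Fin.cast (one_mul k) x :=
    Fin.ext (by simp [Nat.mod_eq_of_lt (by simpa using x.isLt)])
  ext i j
  simp [kron, mcast, scal, hmod, Subsingleton.elim _ (0 : Fin 1)]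

theorem kronPow_zero {m n : ℕ} (A : Matrix (Fin m) (Fin n) ℝ) :
    kronPow 0 A = mcast (pow_zero m).symm (pow_zero n).symm 1 := rfl

theorem kronPow_succ {m n : ℕ} (k : ℕ) (A : Matrix (Fin m) (Fin n) ℝ) :
    kronPow (k + 1) A = mcast (pow_succ m k).symm (pow_succ n k).symm (kron (kronPow k A) A) :=
  rfl

theorem kronPow_succ' {m n : ℕ} (k : ℕ) (A : Matrix (Fin m) (Fin n) ℝ) :
    kronPow (k + 1) A =
      mcast (pow_succ' m k).symm (pow_succ' n k).symm (kron A (kronPow k A)) := by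
  induction k with
  | zero =>
    rw [kronPow_succ, kronPow_zero, kron_mcast_left, kron_mcast_right,
      kron_eq_smul_of_left _ _ rfl rfl, kron_eq_smul_of_right _ _ rfl rfl]
    simp only [mcast_mcast]
  | succ k ih =>
    conv_lhs => rw [kronPow_succ, ih, kron_mcast_left, kron_assoc]
    rw [kronPow_succ k, kron_mcast_right]
    simp only [mcast_mcast]

theorem scal_kron {a b c d : ℕ} (ha : a = 1) (hb : b = 1) (hc : c = 1) (hd : d = 1)
    (A : Matrix (Fin a) (Fin b) ℝ) (B : Matrix (Fin c) (Fin d) ℝ) :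
    scal (kron A B) (by rw [ha, hc]) (by rw [hb, hd]) = scal A ha hb * scal B hc hd := by
  subst ha hb hc hd
  exact kron_apply_finProdFinEquiv A B 0 0 0 0

theorem scal_kronPow_mul_kronPow {n : ℕ} (v : Matrix (Fin 1) (Fin n) ℝ)
    (w : Matrix (Fin n) (Fin 1) ℝ) (l : ℕ) :
    scal (kronPow l v * kronPow l w) (one_pow l) (one_pow l) = scal (v * w) rfl rfl ^ l := by
  induction l with
  | zero =>
    rw [kronPow_zero, kronPow_zero, mcast_mul_mcast, scal_mcast, Matrix.mul_one,
      pow_zero (scal _ _ _)]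
    simp [scal]
  | succ l ih =>
    rw [kronPow_succ, kronPow_succ, mcast_mul_mcast, kron_mul_kron, scal_mcast,
      scal_kron (one_pow l) (one_pow l) rfl rfl, ih, pow_succ]

theorem scal_kronPow_succ_mul_one_kron_kronPow_mul {n : ℕ} (v : Matrix (Fin 1) (Fin n) ℝ)
    (u : Matrix (Fin n) (Fin 1) ℝ) (k : ℕ) :
    scal (mcast rfl (by simp : n * 1 ^ k = n)
        (mcast (one_pow (k + 1)) (pow_succ' n k) (kronPow (k + 1) v)
          * kron (1 : Matrix (Fin n) (Fin n) ℝ) (kronPow k u)) * u) rfl rfl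
      = scal (v * u) rfl rfl ^ (k + 1) := by
  rw [kronPow_succ', mcast_mcast, mcast_mul, kron_mul_kron, Matrix.mul_one,
    kron_eq_smul_of_right _ _ (one_pow k) (one_pow k), mcast_mcast, mcast_mcast,
    mcast_rfl, Matrix.smul_mul, scal_smul, scal_kronPow_mul_kronPow, pow_succ]

theorem add_pow_eq_pow_add_sum_choose_succ {R : Type*} [CommSemiring R] (a b : R) (l : ℕ) :
    (a + b) ^ l =
      a ^ l + ∑ k ∈ Finset.range l, (l.choose (k + 1) : R) * a ^ (l - (k + 1)) * b ^ (k + 1) := by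
  rw [add_comm, add_pow, Finset.sum_range_succ']
  simp only [pow_zero, Nat.sub_zero, Nat.choose_zero_right, Nat.cast_one, mul_one, one_mul]
  rw [add_comm]
  congr 1
  exact Finset.sum_congr rfl fun k _ => by ring

/-- Binomial expansion of a scalar polynomial `g(ṽz + v̂u)` into a part linear in the
Kronecker lifting of `z` plus a part factored through the input `u`:
`g(ṽz + v̂u) = Σ_l γ_l ṽ^{(l)} z^{(l)}
  + (Σ_l γ_l Σ_k C(l,k) (ṽ^{(l-k)} z^{(l-k)}) v̂^{(k)} (I ⊗ u^{(k-1)})) u`. -/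
theorem poly_split_state_input {nz nu : ℕ}
    (vt : Matrix (Fin 1) (Fin nz) ℝ) (z : Matrix (Fin nz) (Fin 1) ℝ)
    (vh : Matrix (Fin 1) (Fin nu) ℝ) (u : Matrix (Fin nu) (Fin 1) ℝ)
    (p : ℕ) (γ : ℕ → ℝ) :
    ∑ l ∈ Finset.range (p + 1), γ l * (scal (vt * z) rfl rfl + scal (vh * u) rfl rfl) ^ l
    = (∑ l ∈ Finset.range (p + 1),
        γ l * scal (kronPow l vt * kronPow l z) (one_pow l) (one_pow l))
      + scal ((∑ l ∈ Finset.range (p + 1), ∑ k ∈ Finset.range l,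
          (γ l * (l.choose (k + 1) : ℝ)) •
            (scal (kronPow (l - (k + 1)) vt * kronPow (l - (k + 1)) z)
                (one_pow _) (one_pow _) •
              mcast rfl (by simp : nu * 1 ^ k = nu)
                (mcast (one_pow (k + 1)) (pow_succ' nu k) (kronPow (k + 1) vh)
                  * kron (1 : Matrix (Fin nu) (Fin nu) ℝ) (kronPow k u)))) * u) rfl rfl := by
  simp only [Matrix.sum_mul, scal_sum, Matrix.smul_mul, scal_smul,
    scal_kronPow_succ_mul_one_kron_kronPow_mul, scal_kronPow_mul_kronPow]
  rw [← Finset.sum_add_distrib]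
  refine Finset.sum_congr rfl fun l _ => ?_
  rw [add_pow_eq_pow_add_sum_choose_succ, mul_add, Finset.mul_sum]
  congr 1
  exact Finset.sum_congr rfl fun k _ => by ring
end
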